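/- arXiv:2211.06286 — 4 statements merged into one kernel-verified Lean document; each statement's English description precedes it below -/
import Mathlib

section
/- For all real numbers z1, z2 with -b ≤ z1 ≤ z2 and all c ≥ 0 (where b > 0), one has 1 ≤ (cosh((z1+b)c)/cosh((z2+b)c)) · e^{(z2-z1)c} ≤ 2. -/
/-!
Writing `cosh A` and `cosh a * exp (A - a)` as half-sums of exponentials, both share the
term `exp A`; the remaining terms are `exp (-A)` and `exp (A - 2 * a)`, and
`exp (-A) ≤ exp (A - 2 * a) ≤ exp A` as soon as `0 ≤ a ≤ A`.
-/

open Real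

lemma two_mul_cosh_mul_exp_sub (a A : ℝ) :
    2 * (cosh a * exp (A - a)) = exp A + exp (A - 2 * a) := by
  rw [cosh_eq, div_mul_eq_mul_div, mul_div_cancel₀ _ two_ne_zero, add_mul, ← exp_add, ← exp_add]
  ring_nf

lemma one_le_cosh_div_cosh_mul_exp_sub {a A : ℝ} (haA : a ≤ A) :
    1 ≤ cosh a / cosh A * exp (A - a) := by
  rw [div_mul_eq_mul_div, one_le_div (cosh_pos A), ← mul_le_mul_iff_right₀ two_pos,
    two_mul_cosh_mul_exp_sub, cosh_eq, mul_div_cancel₀ _ two_ne_zero]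
  gcongr
  linarith

lemma cosh_div_cosh_mul_exp_sub_le_two {a : ℝ} (A : ℝ) (ha : 0 ≤ a) :
    cosh a / cosh A * exp (A - a) ≤ 2 := by
  rw [div_mul_eq_mul_div, div_le_iff₀ (cosh_pos A), ← mul_le_mul_iff_right₀ two_pos,
    two_mul_cosh_mul_exp_sub, cosh_eq]
  have : exp (A - 2 * a) ≤ exp A := exp_le_exp.2 (by linarith)
  linarith [exp_pos (-A)]

theorem stmt0_general (b : ℝ) (z1 z2 c : ℝ)
    (h1 : -b ≤ z1) (h2 : z1 ≤ z2) (hc : 0 ≤ c) :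
    1 ≤ Real.cosh ((z1 + b) * c) / Real.cosh ((z2 + b) * c) * Real.exp ((z2 - z1) * c) ∧
    Real.cosh ((z1 + b) * c) / Real.cosh ((z2 + b) * c) * Real.exp ((z2 - z1) * c) ≤ 2 := by
  have hexp : (z2 - z1) * c = (z2 + b) * c - (z1 + b) * c := by ring
  rw [hexp]
  exact ⟨one_le_cosh_div_cosh_mul_exp_sub (by gcongr),
    cosh_div_cosh_mul_exp_sub_le_two _ (mul_nonneg (by linarith) hc)⟩

/-- For all real numbers `z1 ≤ z2` with `-b ≤ z1` and all `c ≥ 0` (where `b > 0`),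
`1 ≤ (cosh((z1+b)c)/cosh((z2+b)c)) · e^{(z2-z1)c} ≤ 2`. -/
theorem stmt0 (b : ℝ) (hb : 0 < b) (z1 z2 c : ℝ)
    (h1 : -b ≤ z1) (h2 : z1 ≤ z2) (hc : 0 ≤ c) :
    1 ≤ Real.cosh ((z1 + b) * c) / Real.cosh ((z2 + b) * c) * Real.exp ((z2 - z1) * c) ∧
    Real.cosh ((z1 + b) * c) / Real.cosh ((z2 + b) * c) * Real.exp ((z2 - z1) * c) ≤ 2 :=
  stmt0_general b z1 z2 c h1 h2 hc
end

section
/- Let γ ∈ ℝ \ {0} and b > 0. For every ξ ∈ ℝ^{n-1}, the quantity |−iγξ₁ + |ξ| tanh(|ξ|b)|² equals γ²ξ₁² + |ξ|² tanh²(|ξ|b); it vanishes if and only if ξ = 0; and there exist constants c, C > 0 (depending on γ, b) such that for |ξ| ≤ 1 one has c(γ²ξ₁² + |ξ|⁴) ≤ γ²ξ₁² + |ξ|² tanh²(|ξ|b) ≤ C(γ²ξ₁² + |ξ|⁴), while for |ξ| ≥ 1 one has c|ξ|² ≤ γ²ξ₁² + |ξ|² tanh²(|ξ|b) ≤ C|ξ|².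 -/
/-!
The symbol is `−iγξ₁` plus a real number, so its squared modulus splits into the nonnegative
parts `γ²ξ₁²` and `|ξ|² tanh²(|ξ|b)`, and everything reduces to two-sided bounds on
`tanh (|ξ| b)`. For `|ξ| ≤ 1` it is comparable to `|ξ|`: from below by `x / cosh x ≤ tanh x`
together with `cosh (|ξ| b) ≤ cosh b`, from above by `tanh x ≤ sinh x ≤ x eˣ`. For
`|ξ| ≥ 1` it lies between `tanh b` and `1` by monotonicity, and `ξ₁² ≤ |ξ|²` absorbs the
first part. One constant `c = (b / cosh b)²` serves for both lower bounds, because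
`b / cosh b ≤ tanh b < 1`.
-/

open Real

namespace Real

theorem tanh_strictMono : StrictMono tanh := fun x y h => by
  have mem : ∀ z, tanh z ∈ Set.Ioo (-1) 1 := fun z => ⟨neg_one_lt_tanh z, tanh_lt_one z⟩
  rwa [← artanh_lt_artanh_iff (mem x) (mem y), artanh_tanh, artanh_tanh]

theorem tanh_pos {x : ℝ} (hx : 0 < x) : 0 < tanh x := by
  simpa using tanh_strictMono hx

theorem tanh_nonneg {x : ℝ} (hx : 0 ≤ x) : 0 ≤ tanh x := by
  simpa using tanh_strictMono.monotone hx

theorem div_cosh_le_tanh {x : ℝ} (hx : 0 ≤ x) : x / cosh x ≤ tanh x := by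
  rw [tanh_eq_sinh_div_cosh]
  gcongr
  exact self_le_sinh_iff.2 hx

theorem tanh_le_sinh {x : ℝ} (hx : 0 ≤ x) : tanh x ≤ sinh x := by
  rw [tanh_eq_sinh_div_cosh]
  exact div_le_self (sinh_nonneg_iff.2 hx) (one_le_cosh x)

theorem sinh_le_mul_exp (x : ℝ) : sinh x ≤ x * exp x := by
  -- `1 - 2x ≤ e^{-2x}`, multiplied by `eˣ`
  have h : 1 - 2 * x ≤ exp (-(2 * x)) := by linarith [add_one_le_exp (-(2 * x))]
  have hexp : exp (-(2 * x)) * exp x = exp (-x) := by rw [← exp_add]; ring_nf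
  rw [sinh_eq]
  nlinarith [exp_pos x]

end Real

section TanhScaling

variable {b N : ℝ}

theorem mul_div_cosh_le_tanh_mul (hb : 0 ≤ b) (hN₀ : 0 ≤ N) (hN₁ : N ≤ 1) :
    N * (b / cosh b) ≤ tanh (N * b) := by
  have hcosh : cosh (N * b) ≤ cosh b := by
    rw [cosh_le_cosh, abs_of_nonneg (mul_nonneg hN₀ hb), abs_of_nonneg hb]
    exact mul_le_of_le_one_left hb hN₁
  calc N * (b / cosh b) = N * b / cosh b := mul_div_assoc' _ _ _
    _ ≤ N * b / cosh (N * b) := div_le_div_of_nonneg_left (by positivity) (cosh_pos _) hcosh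
    _ ≤ tanh (N * b) := div_cosh_le_tanh (by positivity)

theorem tanh_mul_le_mul (hb : 0 ≤ b) (hN₀ : 0 ≤ N) (hN₁ : N ≤ 1) :
    tanh (N * b) ≤ N * (b * exp b) := by
  have hexp : exp (N * b) ≤ exp b := exp_le_exp.2 (mul_le_of_le_one_left hb hN₁)
  calc tanh (N * b) ≤ sinh (N * b) := tanh_le_sinh (by positivity)
    _ ≤ N * b * exp (N * b) := sinh_le_mul_exp _
    _ ≤ N * b * exp b := by gcongr
    _ = N * (b * exp b) := mul_assoc _ _ _

theorem div_cosh_le_tanh_mul (hb : 0 ≤ b) (hN : 1 ≤ N) : b / cosh b ≤ tanh (N * b) :=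
  calc b / cosh b ≤ tanh b := div_cosh_le_tanh hb
    _ ≤ tanh (N * b) := tanh_strictMono.monotone (le_mul_of_one_le_left hb hN)

theorem sq_div_cosh_le_one (hb : 0 ≤ b) : (b / cosh b) ^ 2 ≤ 1 := by
  have := (div_cosh_le_tanh hb).trans (tanh_lt_one b).le
  exact pow_le_one₀ (by positivity) this

end TanhScaling

section SymbolBounds

variable {γ b a N : ℝ}

theorem symbol_pos (hb : 0 < b) (hN : 0 < N) :
    0 < γ ^ 2 * a ^ 2 + N ^ 2 * tanh (N * b) ^ 2 := by
  have := tanh_pos (mul_pos hN hb)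
  positivity

theorem symbol_ge_of_le_one (hb : 0 ≤ b) (hN₀ : 0 ≤ N) (hN₁ : N ≤ 1) :
    (b / cosh b) ^ 2 * (γ ^ 2 * a ^ 2 + N ^ 4) ≤
      γ ^ 2 * a ^ 2 + N ^ 2 * tanh (N * b) ^ 2 := by
  have hκ : (N * (b / cosh b)) ^ 2 ≤ tanh (N * b) ^ 2 :=
    pow_le_pow_left₀ (by positivity) (mul_div_cosh_le_tanh_mul hb hN₀ hN₁) 2
  have hA : (b / cosh b) ^ 2 * (γ ^ 2 * a ^ 2) ≤ γ ^ 2 * a ^ 2 :=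
    mul_le_of_le_one_left (by positivity) (sq_div_cosh_le_one hb)
  nlinarith [mul_le_mul_of_nonneg_left hκ (sq_nonneg N)]

theorem symbol_le_of_le_one (hb : 0 ≤ b) (hN₀ : 0 ≤ N) (hN₁ : N ≤ 1) :
    γ ^ 2 * a ^ 2 + N ^ 2 * tanh (N * b) ^ 2 ≤
      (1 + γ ^ 2 + (b * exp b) ^ 2) * (γ ^ 2 * a ^ 2 + N ^ 4) := by
  have hκ : tanh (N * b) ^ 2 ≤ (N * (b * exp b)) ^ 2 :=
    pow_le_pow_left₀ (tanh_nonneg (by positivity)) (tanh_mul_le_mul hb hN₀ hN₁) 2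
  nlinarith [mul_le_mul_of_nonneg_left hκ (sq_nonneg N), sq_nonneg γ, sq_nonneg (b * exp b),
    mul_nonneg (sq_nonneg γ) (sq_nonneg a), pow_nonneg hN₀ 4]

theorem symbol_ge_of_one_le (hb : 0 ≤ b) (hN : 1 ≤ N) :
    (b / cosh b) ^ 2 * N ^ 2 ≤ γ ^ 2 * a ^ 2 + N ^ 2 * tanh (N * b) ^ 2 := by
  have hκ : (b / cosh b) ^ 2 ≤ tanh (N * b) ^ 2 :=
    pow_le_pow_left₀ (by positivity) (div_cosh_le_tanh_mul hb hN) 2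
  nlinarith [mul_le_mul_of_nonneg_left hκ (sq_nonneg N), mul_nonneg (sq_nonneg γ) (sq_nonneg a)]

theorem symbol_le_of_sq_le (ha : a ^ 2 ≤ N ^ 2) :
    γ ^ 2 * a ^ 2 + N ^ 2 * tanh (N * b) ^ 2 ≤ (1 + γ ^ 2 + (b * exp b) ^ 2) * N ^ 2 := by
  have ht : tanh (N * b) ^ 2 ≤ 1 := (tanh_sq_lt_one _).le
  nlinarith [mul_le_mul_of_nonneg_left ha (sq_nonneg γ),
    mul_le_mul_of_nonneg_left ht (sq_nonneg N),
    mul_nonneg (sq_nonneg (b * exp b)) (sq_nonneg N)]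

end SymbolBounds

theorem Complex.sq_norm_neg_I_mul_add_ofReal (x y : ℝ) :
    ‖-(Complex.I * x) + y‖ ^ 2 = x ^ 2 + y ^ 2 := by
  rw [Complex.sq_norm, Complex.normSq_apply]
  simp only [Complex.add_re, Complex.add_im, Complex.neg_re, Complex.neg_im, Complex.mul_re,
    Complex.mul_im, Complex.I_re, Complex.I_im, Complex.ofReal_re, Complex.ofReal_im]
  ring

theorem EuclideanSpace.sq_apply_le_sq_norm {ι : Type*} [Fintype ι] (ξ : EuclideanSpace ℝ ι)
    (i : ι) : ξ i ^ 2 ≤ ‖ξ‖ ^ 2 :=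
  sq_le_sq.2 ((PiLp.norm_apply_le ξ i).trans (le_abs_self _))

theorem stmt3_general (d : ℕ) (γ b : ℝ) (hb : 0 < b) :
    (∀ ξ : EuclideanSpace ℝ (Fin (d + 1)),
      ‖-(Complex.I * (γ : ℂ) * ((ξ 0 : ℝ) : ℂ)) +
          ((‖ξ‖ * Real.tanh (‖ξ‖ * b) : ℝ) : ℂ)‖ ^ 2 =
        γ ^ 2 * (ξ 0) ^ 2 + ‖ξ‖ ^ 2 * Real.tanh (‖ξ‖ * b) ^ 2) ∧
    (∀ ξ : EuclideanSpace ℝ (Fin (d + 1)),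
      γ ^ 2 * (ξ 0) ^ 2 + ‖ξ‖ ^ 2 * Real.tanh (‖ξ‖ * b) ^ 2 = 0 ↔ ξ = 0) ∧
    ∃ c C : ℝ, 0 < c ∧ 0 < C ∧
      ∀ ξ : EuclideanSpace ℝ (Fin (d + 1)),
        (‖ξ‖ ≤ 1 →
          c * (γ ^ 2 * (ξ 0) ^ 2 + ‖ξ‖ ^ 4) ≤
              γ ^ 2 * (ξ 0) ^ 2 + ‖ξ‖ ^ 2 * Real.tanh (‖ξ‖ * b) ^ 2 ∧
            γ ^ 2 * (ξ 0) ^ 2 + ‖ξ‖ ^ 2 * Real.tanh (‖ξ‖ * b) ^ 2 ≤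
              C * (γ ^ 2 * (ξ 0) ^ 2 + ‖ξ‖ ^ 4)) ∧
        (1 ≤ ‖ξ‖ →
          c * ‖ξ‖ ^ 2 ≤ γ ^ 2 * (ξ 0) ^ 2 + ‖ξ‖ ^ 2 * Real.tanh (‖ξ‖ * b) ^ 2 ∧
            γ ^ 2 * (ξ 0) ^ 2 + ‖ξ‖ ^ 2 * Real.tanh (‖ξ‖ * b) ^ 2 ≤ C * ‖ξ‖ ^ 2) := by
  refine ⟨fun ξ => ?_, fun ξ => ⟨fun h => ?_, ?_⟩, ?_⟩
  · rw [mul_assoc, ← Complex.ofReal_mul, Complex.sq_norm_neg_I_mul_add_ofReal, mul_pow, mul_pow]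
  · by_contra hξ
    exact (symbol_pos hb (norm_pos_iff.2 hξ)).ne' h
  · rintro rfl
    simp
  · have := cosh_pos b
    refine ⟨(b / cosh b) ^ 2, 1 + γ ^ 2 + (b * exp b) ^ 2, by positivity, by positivity,
      fun ξ => ⟨fun h => ?_, fun h => ?_⟩⟩
    · exact ⟨symbol_ge_of_le_one hb.le (norm_nonneg ξ) h,
        symbol_le_of_le_one hb.le (norm_nonneg ξ) h⟩
    · exact ⟨symbol_ge_of_one_le hb.le h,
        symbol_le_of_sq_le (EuclideanSpace.sq_apply_le_sq_norm ξ 0)⟩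

/-- For `γ ≠ 0`, `b > 0`, and `ξ ∈ ℝ^{d+1}` (with first coordinate `ξ₁ = ξ 0`):
`|−iγξ₁ + |ξ| tanh(|ξ|b)|² = γ²ξ₁² + |ξ|² tanh²(|ξ|b)`; this vanishes iff `ξ = 0`; and there
are `c, C > 0` (depending on `γ, b`) with the stated low- and high-frequency equivalences. -/
theorem stmt3 (d : ℕ) (γ b : ℝ) (hγ : γ ≠ 0) (hb : 0 < b) :
    (∀ ξ : EuclideanSpace ℝ (Fin (d + 1)),
      ‖-(Complex.I * (γ : ℂ) * ((ξ 0 : ℝ) : ℂ)) +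
          ((‖ξ‖ * Real.tanh (‖ξ‖ * b) : ℝ) : ℂ)‖ ^ 2 =
        γ ^ 2 * (ξ 0) ^ 2 + ‖ξ‖ ^ 2 * Real.tanh (‖ξ‖ * b) ^ 2) ∧
    (∀ ξ : EuclideanSpace ℝ (Fin (d + 1)),
      γ ^ 2 * (ξ 0) ^ 2 + ‖ξ‖ ^ 2 * Real.tanh (‖ξ‖ * b) ^ 2 = 0 ↔ ξ = 0) ∧
    ∃ c C : ℝ, 0 < c ∧ 0 < C ∧
      ∀ ξ : EuclideanSpace ℝ (Fin (d + 1)),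
        (‖ξ‖ ≤ 1 →
          c * (γ ^ 2 * (ξ 0) ^ 2 + ‖ξ‖ ^ 4) ≤
              γ ^ 2 * (ξ 0) ^ 2 + ‖ξ‖ ^ 2 * Real.tanh (‖ξ‖ * b) ^ 2 ∧
            γ ^ 2 * (ξ 0) ^ 2 + ‖ξ‖ ^ 2 * Real.tanh (‖ξ‖ * b) ^ 2 ≤
              C * (γ ^ 2 * (ξ 0) ^ 2 + ‖ξ‖ ^ 4)) ∧
        (1 ≤ ‖ξ‖ →
          c * ‖ξ‖ ^ 2 ≤ γ ^ 2 * (ξ 0) ^ 2 + ‖ξ‖ ^ 2 * Real.tanh (‖ξ‖ * b) ^ 2 ∧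
            γ ^ 2 * (ξ 0) ^ 2 + ‖ξ‖ ^ 2 * Real.tanh (‖ξ‖ * b) ^ 2 ≤ C * ‖ξ‖ ^ 2) :=
  stmt3_general d γ b hb
end

section
/- Let E be a Banach space, ν > 0, and B_ν the open ball of radius ν centered at 0. Suppose L : B_ν → E and B : B_ν × E → E satisfy: (i) B(x,·) is linear for each x ∈ B_ν; (ii) there is C_L ∈ (0,1) with ‖L(x)‖ ≤ C_L‖x‖ for x ∈ B_ν; (iii) there is an increasing G_B with ‖B(x,y)‖ ≤ G_B(‖x‖)‖y‖, and some r* > 0 with C_L + G_B(r*) < 1; (iv) there is an increasing F_L with ‖L(x₁)−L(x₂)‖ ≤ ‖x₁−x₂‖ F_L(‖x₁‖+‖x₂‖) for x₁,x₂ ∈ B_ν; (v) there is an increasing F_B with ‖B(x₁,y)−B(x₂,y)‖ ≤ ‖x₁−x₂‖‖y‖ F_B(‖x₁‖+‖x₂‖); and (vi) F_L(2ν) + G_B(ν) + ν F_B(2ν) < 1/2. Then there exists δ > 0 (depending on ν and r*) such that for every x₀ ∈ E with ‖x₀‖ < δ, the map N(x) := x₀ + L(x) + B(x,x) has a unique fixed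 point x* in B_ν, and ‖x*‖ ≤ 2‖x₀‖. -/
open Set

/-- Abstract fixed point lemma (Lemma 5.1 of the paper). `E` is a Banach space, `B_ν` the open
ball of radius `ν` about `0`; under the quantitative hypotheses on `L` and the bilinear-type map
`B`, there is `δ > 0` such that for every `x₀` with `‖x₀‖ < δ` the map
`N(x) = x₀ + L(x) + B(x, x)` has a unique fixed point `x*` in `B_ν`, with `‖x*‖ ≤ 2‖x₀‖`. -/
theorem stmt5 {E : Type*} [NormedAddCommGroup E] [NormedSpace ℝ E] [CompleteSpace E]
    (ν : ℝ) (hν : 0 < ν)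
    (L : E → E) (B : E → E → E)
    (hBlin : ∀ x ∈ Metric.ball (0 : E) ν, IsLinearMap ℝ (B x))
    (CL : ℝ) (hCL0 : 0 < CL) (hCL1 : CL < 1)
    (hL : ∀ x ∈ Metric.ball (0 : E) ν, ‖L x‖ ≤ CL * ‖x‖)
    (GB : ℝ → ℝ) (hGBmono : Monotone GB)
    (hGB : ∀ x ∈ Metric.ball (0 : E) ν, ∀ y : E, ‖B x y‖ ≤ GB ‖x‖ * ‖y‖)
    (rstar : ℝ) (hrstar : 0 < rstar) (hsmall : CL + GB rstar < 1)
    (FL : ℝ → ℝ) (hFLmono : Monotone FL)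
    (hFL : ∀ x₁ ∈ Metric.ball (0 : E) ν, ∀ x₂ ∈ Metric.ball (0 : E) ν,
      ‖L x₁ - L x₂‖ ≤ ‖x₁ - x₂‖ * FL (‖x₁‖ + ‖x₂‖))
    (FB : ℝ → ℝ) (hFBmono : Monotone FB)
    (hFB : ∀ x₁ ∈ Metric.ball (0 : E) ν, ∀ x₂ ∈ Metric.ball (0 : E) ν, ∀ y : E,
      ‖B x₁ y - B x₂ y‖ ≤ ‖x₁ - x₂‖ * ‖y‖ * FB (‖x₁‖ + ‖x₂‖))
    (hfinal : FL (2 * ν) + GB ν + ν * FB (2 * ν) < 1 / 2) :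
    ∃ δ : ℝ, 0 < δ ∧
      ∀ x₀ : E, ‖x₀‖ < δ →
        ∃ xs ∈ Metric.ball (0 : E) ν,
          (xs = x₀ + L xs + B xs xs ∧ ‖xs‖ ≤ 2 * ‖x₀‖) ∧
          ∀ y ∈ Metric.ball (0 : E) ν, y = x₀ + L y + B y y → y = xs := by
  rcases subsingleton_or_nontrivial E with hE | hE
  · refine ⟨1, one_pos, fun x₀ _ => ⟨0, by simp [hν], ⟨?_, ?_⟩, fun y _ _ => Subsingleton.elim _ _⟩⟩
    · exact Subsingleton.elim _ _
    · simp [norm_nonneg]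
  have h0mem : (0 : E) ∈ Metric.ball (0 : E) ν := by simp [hν]
  -- L 0 = 0 and B 0 0 = 0
  have hL0 : L 0 = 0 := by
    have := hL 0 h0mem
    simp only [norm_zero, mul_zero] at this
    exact norm_le_zero_iff.mp this
  have hB00 : B 0 0 = 0 := by
    have := hGB 0 h0mem 0
    simp only [norm_zero, mul_zero] at this
    exact norm_le_zero_iff.mp this
  -- FB (2ν) ≥ 0, using nontriviality
  obtain ⟨v, hv⟩ := exists_ne (0 : E)
  have hvnorm : 0 < ‖v‖ := norm_pos_iff.mpr hv
  have hFB2 : 0 ≤ FB (2 * ν) := by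
    set w : E := (ν / (2 * ‖v‖)) • v with hw
    have hwnorm : ‖w‖ = ν / 2 := by
      rw [hw, norm_smul, Real.norm_eq_abs, abs_of_pos (by positivity)]
      field_simp
    have hwmem : w ∈ Metric.ball (0 : E) ν := by
      simp [Metric.mem_ball, dist_zero_right, hwnorm]; linarith
    have h := hFB 0 h0mem w hwmem v
    have hnorm0 : (0:ℝ) ≤ ‖(0:E) - w‖ * ‖v‖ * FB (‖(0:E)‖ + ‖w‖) :=
      le_trans (norm_nonneg _) h
    have hwpos : 0 < ‖(0:E) - w‖ := by
      simp only [zero_sub, norm_neg, hwnorm]; linarith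
    have hFBw : 0 ≤ FB (‖(0:E)‖ + ‖w‖) := by
      by_contra hneg
      push_neg at hneg
      nlinarith [mul_pos hwpos hvnorm]
    refine le_trans hFBw (hFBmono ?_)
    simp [hwnorm]; linarith
  -- contraction estimate on the ball
  have key : ∀ x₁ ∈ Metric.ball (0 : E) ν, ∀ x₂ ∈ Metric.ball (0 : E) ν,
      ‖(L x₁ + B x₁ x₁) - (L x₂ + B x₂ x₂)‖ ≤ (1 / 2) * ‖x₁ - x₂‖ := by
    intro x₁ h₁ x₂ h₂
    have hn₁ : ‖x₁‖ < ν := by simpa using Metric.mem_ball.mp h₁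
    have hn₂ : ‖x₂‖ < ν := by simpa using Metric.mem_ball.mp h₂
    have hsum : ‖x₁‖ + ‖x₂‖ ≤ 2 * ν := by linarith
    have hd : (0 : ℝ) ≤ ‖x₁ - x₂‖ := norm_nonneg _
    have e1 : ‖L x₁ - L x₂‖ ≤ ‖x₁ - x₂‖ * FL (2 * ν) :=
      (hFL x₁ h₁ x₂ h₂).trans (mul_le_mul_of_nonneg_left (hFLmono hsum) hd)
    have e2 : ‖B x₁ x₁ - B x₂ x₁‖ ≤ ‖x₁ - x₂‖ * (ν * FB (2 * ν)) := by
      refine (hFB x₁ h₁ x₂ h₂ x₁).trans ?_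
      have hFmono := hFBmono hsum
      rcases le_or_gt (FB (‖x₁‖ + ‖x₂‖)) 0 with hneg | hpos
      · have h0 : ‖x₁ - x₂‖ * ‖x₁‖ * FB (‖x₁‖ + ‖x₂‖) ≤ 0 :=
          mul_nonpos_of_nonneg_of_nonpos (mul_nonneg hd (norm_nonneg x₁)) hneg
        refine h0.trans ?_
        positivity
      · calc ‖x₁ - x₂‖ * ‖x₁‖ * FB (‖x₁‖ + ‖x₂‖)
            ≤ ‖x₁ - x₂‖ * ν * FB (‖x₁‖ + ‖x₂‖) :=
              mul_le_mul_of_nonneg_right (mul_le_mul_of_nonneg_left hn₁.le hd) hpos.le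
          _ ≤ ‖x₁ - x₂‖ * ν * FB (2 * ν) :=
              mul_le_mul_of_nonneg_left hFmono (mul_nonneg hd hν.le)
          _ = ‖x₁ - x₂‖ * (ν * FB (2 * ν)) := mul_assoc _ _ _
    have e3 : ‖B x₂ (x₁ - x₂)‖ ≤ ‖x₁ - x₂‖ * GB ν := by
      calc ‖B x₂ (x₁ - x₂)‖ ≤ GB ‖x₂‖ * ‖x₁ - x₂‖ := hGB x₂ h₂ (x₁ - x₂)
        _ ≤ GB ν * ‖x₁ - x₂‖ := mul_le_mul_of_nonneg_right (hGBmono hn₂.le) hd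
        _ = ‖x₁ - x₂‖ * GB ν := mul_comm _ _
    have hsplit : (L x₁ + B x₁ x₁) - (L x₂ + B x₂ x₂)
        = (L x₁ - L x₂) + (B x₁ x₁ - B x₂ x₁) + B x₂ (x₁ - x₂) := by
      rw [(hBlin x₂ h₂).map_sub]
      abel
    calc ‖(L x₁ + B x₁ x₁) - (L x₂ + B x₂ x₂)‖
        ≤ ‖L x₁ - L x₂‖ + ‖B x₁ x₁ - B x₂ x₁‖ + ‖B x₂ (x₁ - x₂)‖ := by
          rw [hsplit]; exact norm_add₃_le
      _ ≤ ‖x₁ - x₂‖ * FL (2 * ν) + ‖x₁ - x₂‖ * (ν * FB (2 * ν)) + ‖x₁ - x₂‖ * GB ν := by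
          linarith
      _ ≤ (1 / 2) * ‖x₁ - x₂‖ := by nlinarith
  refine ⟨ν / 4, by linarith, fun x₀ hx₀ => ?_⟩
  set r : ℝ := 2 * ‖x₀‖ with hr
  have hr0 : 0 ≤ r := by positivity
  have hrν : r < ν := by have := norm_nonneg x₀; simp only [hr]; linarith
  have hsub : Metric.closedBall (0 : E) r ⊆ Metric.ball (0 : E) ν := fun x hx => by
    simp only [Metric.mem_closedBall, Metric.mem_ball] at *
    linarith
  have maps : ∀ x ∈ Metric.closedBall (0 : E) r,
      x₀ + L x + B x x ∈ Metric.closedBall (0 : E) r := by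
    intro x hx
    have hxν := hsub hx
    have hk := key x hxν 0 h0mem
    rw [hL0, hB00] at hk
    simp only [add_zero, sub_zero] at hk
    have hxr : ‖x‖ ≤ r := by simpa using hx
    simp only [Metric.mem_closedBall, dist_zero_right]
    calc ‖x₀ + L x + B x x‖ = ‖x₀ + (L x + B x x)‖ := by rw [add_assoc]
      _ ≤ ‖x₀‖ + ‖L x + B x x‖ := norm_add_le _ _
      _ ≤ ‖x₀‖ + (1 / 2) * ‖x‖ := by linarith
      _ ≤ r := by simp only [hr]; linarith
  haveI : Nonempty (Metric.closedBall (0 : E) r) :=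
    ⟨⟨0, Metric.mem_closedBall_self hr0⟩⟩
  haveI : CompleteSpace (Metric.closedBall (0 : E) r) :=
    Metric.isClosed_closedBall.completeSpace_coe
  set f : Metric.closedBall (0 : E) r → Metric.closedBall (0 : E) r :=
    fun x => ⟨x₀ + L x + B x x, maps x x.2⟩ with hf
  have hcontr : ContractingWith (1 / 2 : NNReal) f := by
    refine ⟨by rw [← NNReal.coe_lt_coe]; norm_num, LipschitzWith.of_dist_le_mul fun a b => ?_⟩
    have hk := key a (hsub a.2) b (hsub b.2)
    have hdist : dist (f a) (f b) = ‖(L (a : E) + B a a) - (L (b : E) + B b b)‖ := by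
      rw [Subtype.dist_eq, dist_eq_norm]
      congr 1
      simp only [hf]
      abel
    rw [hdist, Subtype.dist_eq, dist_eq_norm]
    simpa using hk
  set p := hcontr.fixedPoint f with hp
  have hfix : f p = p := hcontr.fixedPoint_isFixedPt
  have hpe : (p : E) = x₀ + L (p : E) + B p p := by
    have := congrArg (Subtype.val) hfix
    simpa [hf] using this.symm
  refine ⟨(p : E), hsub p.2, ⟨hpe, ?_⟩, ?_⟩
  · have hpp := p.2
    rw [Metric.mem_closedBall, dist_zero_right] at hpp
    exact hpp
  · intro y hy hyfix
    have hk := key y hy p (hsub p.2)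
    have hdiff : y - (p : E) = (L y + B y y) - (L (p : E) + B p p) := by
      conv_lhs => rw [hyfix, hpe]
      abel
    rw [← hdiff] at hk
    have : ‖y - (p : E)‖ ≤ 0 := by linarith
    exact sub_eq_zero.mp (norm_le_zero_iff.mp this)
end

section
/- Let b, c ≥ 0 and z ∈ [−b, 0]. Then e^{zc} ≤ cosh((z+b)c)/cosh(bc) ≤ 2 e^{zc}. -/
/-- For `b, c ≥ 0` and `z ∈ [−b, 0]`, `e^{zc} ≤ cosh((z+b)c)/cosh(bc) ≤ 2 e^{zc}`. -/
theorem stmt8 (b c z : ℝ) (hb : 0 ≤ b) (hc : 0 ≤ c) (hz : z ∈ Set.Icc (-b) 0) :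
    Real.exp (z * c) ≤ Real.cosh ((z + b) * c) / Real.cosh (b * c) ∧
    Real.cosh ((z + b) * c) / Real.cosh (b * c) ≤ 2 * Real.exp (z * c) := by
  obtain ⟨hz1, hz2⟩ := hz
  have hpos : 0 < Real.cosh (b * c) := Real.cosh_pos _
  have hmul : Real.exp (z * c) * Real.exp (b * c) = Real.exp ((z + b) * c) := by
    rw [← Real.exp_add]; ring_nf
  have hmul2 : Real.exp (z * c) * Real.exp (-(b * c)) = Real.exp ((z - b) * c) := by
    rw [← Real.exp_add]; ring_nf
  have hkey : Real.exp ((z - b) * c) ≤ Real.exp (-((z + b) * c)) := by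
    apply Real.exp_le_exp.2
    nlinarith [mul_nonneg (neg_nonneg.2 hz2) hc]
  have hkey2 : Real.exp (-((z + b) * c)) ≤ Real.exp ((z + b) * c) := by
    apply Real.exp_le_exp.2
    nlinarith [mul_nonneg (by linarith : (0:ℝ) ≤ z + b) hc]
  constructor
  · rw [le_div_iff₀ hpos, Real.cosh_eq, Real.cosh_eq]
    nlinarith
  · rw [div_le_iff₀ hpos, Real.cosh_eq, Real.cosh_eq]
    nlinarith [Real.exp_pos ((z - b) * c)]
end
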